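/- Let φ ∈ ℝ³ with φ ≠ 0 and set θ = ‖φ‖ (Euclidean norm). Then the series Γ₃(skew(φ)) = Σ_{n=0}^∞ (1/(n+3)!)·skew(φ)ⁿ converges and equals (1/6)·I₃ + ((θ² + 2cos θ − 2)/(2θ⁴))·skew(φ) + ((θ³ − 6θ + 6 sin θ)/(6θ⁵))·skew(φ)², where I₃ is the 3×3 identity matrix. -/

import Mathlib

/-!
The matrix `A = skew φ` satisfies `A³ = -θ² A` with `θ = ‖φ‖` (its eigenvalues are `0, ±iθ`), so
`A^(2k+1) = (-θ²)^k A` and `A^(2k+2) = (-θ²)^k A²`. Splitting `Σ Aⁿ/(n+3)!` by the parity of `n ≥ 1`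
therefore leaves only `I`, `A` and `A²`, whose coefficients `Σ (-θ²)^k/(2k+4)!` and
`Σ (-θ²)^k/(2k+5)!` are the tails of the cosine and sine series after their Taylor polynomials of
degree 2 and 3, divided by `θ⁴` and `θ⁵`.
-/

open Matrix

def skew (ω : EuclideanSpace ℝ (Fin 3)) : Matrix (Fin 3) (Fin 3) ℝ :=
  !![0, -ω 2, ω 1; ω 2, 0, -ω 0; -ω 1, ω 0, 0]

section CubeRelation

variable {S R : Type*} [CommSemiring S] [Semiring R] [Algebra S R] {A : R} {c : S}

theorem pow_two_mul_add_one_of_pow_three (hA : A ^ 3 = c • A) (k : ℕ) :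
    A ^ (2 * k + 1) = c ^ k • A := by
  induction k with
  | zero => simp
  | succ k ih =>
    calc A ^ (2 * (k + 1) + 1) = A ^ (2 * k + 1) * A ^ 2 := by
          rw [show 2 * (k + 1) + 1 = 2 * k + 1 + 2 by ring, pow_add]
      _ = c ^ k • A ^ 3 := by rw [ih, smul_mul_assoc, ← pow_succ']
      _ = c ^ (k + 1) • A := by rw [hA, smul_smul, pow_succ]

theorem pow_two_mul_add_two_of_pow_three (hA : A ^ 3 = c • A) (k : ℕ) :
    A ^ (2 * k + 2) = c ^ k • A ^ 2 := by
  rw [pow_succ, pow_two_mul_add_one_of_pow_three hA, smul_mul_assoc, sq]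

variable [TopologicalSpace S] [TopologicalSpace R] [ContinuousAdd R] [ContinuousSMul S R]

theorem hasSum_smul_pow_of_pow_three {f : ℕ → S} {a b : S} (hA : A ^ 3 = c • A)
    (hodd : HasSum (fun k => f (2 * k + 1) * c ^ k) a)
    (heven : HasSum (fun k => f (2 * k + 2) * c ^ k) b) :
    HasSum (fun n => f n • A ^ n) (f 0 • 1 + a • A + b • A ^ 2) := by
  have hshift : HasSum (fun n => f (n + 1) • A ^ (n + 1)) (a • A + b • A ^ 2) := by
    refine HasSum.even_add_odd ((hodd.smul_const A).congr_fun fun k => ?_)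
      ((heven.smul_const (A ^ 2)).congr_fun fun k => ?_)
    · rw [pow_two_mul_add_one_of_pow_three hA, smul_smul]
    · rw [pow_two_mul_add_two_of_pow_three hA, smul_smul]
  simpa only [pow_zero, add_assoc] using HasSum.zero_add (f := fun n => f n • A ^ n) hshift

end CubeRelation

theorem skew_pow_three (ω : EuclideanSpace ℝ (Fin 3)) : skew ω ^ 3 = (-‖ω‖ ^ 2) • skew ω := by
  rw [EuclideanSpace.norm_sq_eq, Fin.sum_univ_three]
  ext i j
  fin_cases i <;> fin_cases j <;> simp [skew, pow_succ, Matrix.mul_apply, Fin.sum_univ_three] <;> ring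

theorem Real.hasSum_neg_sq_pow_div_factorial_add_four {θ : ℝ} (hθ : θ ≠ 0) :
    HasSum (fun k : ℕ => (-θ ^ 2) ^ k / ((2 * k + 4).factorial : ℝ))
      ((θ ^ 2 + 2 * cos θ - 2) / (2 * θ ^ 4)) := by
  have htaylor : ∑ i ∈ Finset.range 2, (-1) ^ i * θ ^ (2 * i) / ((2 * i).factorial : ℝ)
      = 1 - θ ^ 2 / 2 := by
    norm_num [Finset.sum_range_succ, sub_eq_add_neg, neg_div]
  rw [show (θ ^ 2 + 2 * cos θ - 2) / (2 * θ ^ 4) = (cos θ - (1 - θ ^ 2 / 2)) / θ ^ 4 by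
    field_simp; ring, ← htaylor]
  refine (((hasSum_nat_add_iff' 2).mpr (hasSum_cos θ)).div_const (θ ^ 4)).congr_fun fun k => ?_
  rw [show 2 * (k + 2) = 2 * k + 4 by ring]
  field_simp
  ring

theorem Real.hasSum_neg_sq_pow_div_factorial_add_five {θ : ℝ} (hθ : θ ≠ 0) :
    HasSum (fun k : ℕ => (-θ ^ 2) ^ k / ((2 * k + 5).factorial : ℝ))
      ((θ ^ 3 - 6 * θ + 6 * sin θ) / (6 * θ ^ 5)) := by
  have htaylor : ∑ i ∈ Finset.range 2, (-1) ^ i * θ ^ (2 * i + 1) / ((2 * i + 1).factorial : ℝ)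
      = θ - θ ^ 3 / 6 := by
    norm_num [Finset.sum_range_succ, Nat.factorial, sub_eq_add_neg, neg_div]
  rw [show (θ ^ 3 - 6 * θ + 6 * sin θ) / (6 * θ ^ 5) = (sin θ - (θ - θ ^ 3 / 6)) / θ ^ 5 by
    field_simp; ring, ← htaylor]
  refine (((hasSum_nat_add_iff' 2).mpr (hasSum_sin θ)).div_const (θ ^ 5)).congr_fun fun k => ?_
  rw [show 2 * (k + 2) + 1 = 2 * k + 5 by ring]
  field_simp
  ring

/-- The series `Γ₃(skew φ) = Σ_{n=0}^∞ skew(φ)ⁿ/(n+3)!` converges to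
`(1/6)·I + ((θ² + 2 cos θ − 2)/(2θ⁴))·skew φ + ((θ³ − 6θ + 6 sin θ)/(6θ⁵))·skew(φ)²`
with `θ = ‖φ‖`. -/
theorem gamma_three_skew (φ : EuclideanSpace ℝ (Fin 3)) (hφ : φ ≠ 0) :
    HasSum (fun n : ℕ => (((n + 3).factorial : ℝ))⁻¹ • skew φ ^ n)
      ((1 / 6 : ℝ) • (1 : Matrix (Fin 3) (Fin 3) ℝ)
        + ((‖φ‖ ^ 2 + 2 * Real.cos ‖φ‖ - 2) / (2 * ‖φ‖ ^ 4)) • skew φ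
        + ((‖φ‖ ^ 3 - 6 * ‖φ‖ + 6 * Real.sin ‖φ‖) / (6 * ‖φ‖ ^ 5)) • (skew φ * skew φ)) := by
  have hθ : ‖φ‖ ≠ 0 := norm_ne_zero_iff.mpr hφ
  have h := hasSum_smul_pow_of_pow_three (skew_pow_three φ) (f := fun n => ((n + 3).factorial : ℝ)⁻¹)
    ((Real.hasSum_neg_sq_pow_div_factorial_add_four hθ).congr_fun fun k => ?_)
    ((Real.hasSum_neg_sq_pow_div_factorial_add_five hθ).congr_fun fun k => ?_)
  · rw [← sq, show (1 / 6 : ℝ) = ((0 + 3).factorial : ℝ)⁻¹ by norm_num [Nat.factorial]]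
    exact h
  all_goals ring_nf
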